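/- In any GCGWE with homogeneous resources (arbitrary, possibly asymmetric S), if every player has all R resources available (R_n = R for all n) and X is a pure Nash equilibrium, then the total congestion satisfies C(X) = Σ_n Σ_{m: X_m = X_n} S_{m,n} ≤ (1/R) Σ_n Σ_{m=1}^N S_{m,n}. -/

import Mathlib

open Finset

/-- Congestion level of player `n` in state `Z`. -/
def cong {N R : ℕ} (S : Fin N → Fin N → ℝ) (Z : Fin N → Fin R) (n : Fin N) : ℝ :=
  ∑ m ∈ univ.filter (fun m => Z m = Z n), S m n

/-- In any GCGWE with homogeneous resources (arbitrary, possibly asymmetric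
`S`) in which every player has all `R` resources available, at any pure Nash
equilibrium `X` the total congestion satisfies
`C(X) ≤ (1/R) Σ_n Σ_m S_{m,n}`. -/
theorem stmt14 (N R : ℕ) (hR : 0 < R)
    (S : Fin N → Fin N → ℝ)
    (hSnonneg : ∀ m n, 0 ≤ S m n) (hSdiag : ∀ n, S n n = 0)
    (f : Fin N → ℝ → ℝ) (hf : ∀ n, StrictAnti (f n))
    (X : Fin N → Fin R)
    (hNE : ∀ (n : Fin N) (r : Fin R),
      f n (cong S (Function.update X n r) n) ≤ f n (cong S X n)) :
    (∑ n, cong S X n) ≤ (1 / R) * ∑ n, ∑ m, S m n := by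
  have hRpos : (0 : ℝ) < R := by exact_mod_cast hR
  have key : ∀ n, (R : ℝ) * cong S X n ≤ ∑ m, S m n := by
    intro n
    have h1 : ∀ r, cong S X n ≤ cong S (Function.update X n r) n := fun r =>
      ((hf n).le_iff_ge).mp (hNE n r)
    calc (R : ℝ) * cong S X n = ∑ _r : Fin R, cong S X n := by
          simp [mul_comm]
      _ ≤ ∑ r : Fin R, cong S (Function.update X n r) n :=
          Finset.sum_le_sum (fun r _ => h1 r)
      _ = ∑ r : Fin R, ∑ m, if Function.update X n r m = r then S m n else 0 := by
          simp [cong, Finset.sum_filter]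
      _ = ∑ m, ∑ r : Fin R, if Function.update X n r m = r then S m n else 0 :=
          Finset.sum_comm
      _ ≤ ∑ m, S m n := by
          apply Finset.sum_le_sum
          intro m _
          by_cases hm : m = n
          · subst hm; simp [hSdiag, hSnonneg]
          · have h2 : ∀ r : Fin R, (if Function.update X n r m = r then S m n else 0)
                = if X m = r then S m n else 0 := by
              intro r; rw [Function.update_of_ne hm]
            rw [Finset.sum_congr rfl (fun r _ => h2 r)]
            simp
  have : ∑ n, cong S X n ≤ ∑ n, (∑ m, S m n) / R := by
    apply Finset.sum_le_sum
    intro n _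
    rw [le_div_iff₀ hRpos, mul_comm]
    exact key n
  calc ∑ n, cong S X n ≤ ∑ n, (∑ m, S m n) / R := this
    _ = (1 / R) * ∑ n, ∑ m, S m n := by
        rw [Finset.mul_sum]
        exact Finset.sum_congr rfl (fun n _ => by ring)
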